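/- Monotonicity of block count under LCP bound: the number of maximal blocks in the stable merge of sorted string lists A and B is at most L + σ + 1, and consequently, if every string has length at least 1, the number of alternations between sources is at most L + σ. -/

import Mathlib

/-- Length of the longest common prefix of two strings. -/
def lcp {α : Type*} [DecidableEq α] : List α → List α → ℕ
  | a :: s, b :: t => if a = b then lcp s t + 1 else 0
  | _, _ => 0

/-- The stable merge of two lists, tagging each element with the list (1 or 2) it
came from; ties are broken in favor of the first list. -/
def mergeTagged {α : Type*} [LinearOrder α] : List α → List α → List (α × ℕ)
  | [], B => B.map (·, 2)
  | a :: A, [] => (a, 1) :: mergeTagged A []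
  | a :: A, b :: B =>
    if a ≤ b then (a, 1) :: mergeTagged A (b :: B)
    else (b, 2) :: mergeTagged (a :: A) B
  termination_by A B => A.length + B.length

/-- The number of maximal blocks (maximal runs of equal consecutive elements) of a list. -/
def runsCount {β : Type*} [DecidableEq β] : List β → ℕ
  | [] => 0
  | [_] => 1
  | a :: b :: l => (if a = b then 0 else 1) + runsCount (b :: l)

lemma mergeTagged_perm {α : Type*} [LinearOrder α] (A B : List α) :
    List.Perm ((mergeTagged A B).map Prod.fst) (A ++ B) := by
  induction A, B using mergeTagged.induct with
  | case1 B => simp [mergeTagged, Function.comp_def]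
  | case2 a A ih => simpa [mergeTagged] using ih
  | case3 a A b B h ih => simpa [mergeTagged, h] using ih.cons a
  | case4 a A b B h ih =>
    simp only [mergeTagged, if_neg h, List.map_cons]
    exact (ih.cons b).trans List.perm_middle.symm

lemma mergeTagged_sorted {α : Type*} [LinearOrder α] (A B : List α)
    (hA : A.Pairwise (· ≤ ·)) (hB : B.Pairwise (· ≤ ·)) :
    ((mergeTagged A B).map Prod.fst).Pairwise (· ≤ ·) := by
  induction A, B using mergeTagged.induct with
  | case1 B => simpa [mergeTagged, List.map_map, Function.comp_def] using hB
  | case2 a A ih =>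
    rw [mergeTagged, List.map_cons, List.pairwise_cons]
    refine ⟨?_, ih hA.of_cons hB⟩
    intro x hx
    have : x ∈ A ++ ([] : List α) := (mergeTagged_perm A []).mem_iff.mp hx
    exact List.rel_of_pairwise_cons hA (by simpa using this)
  | case3 a A b B h ih =>
    rw [mergeTagged, if_pos h, List.map_cons, List.pairwise_cons]
    refine ⟨?_, ih hA.of_cons hB⟩
    intro x hx
    have : x ∈ A ++ (b :: B) := (mergeTagged_perm A (b :: B)).mem_iff.mp hx
    rcases List.mem_append.mp this with h1 | h1
    · exact List.rel_of_pairwise_cons hA h1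
    · rcases List.mem_cons.mp h1 with rfl | h1
      · exact h
      · exact h.trans (List.rel_of_pairwise_cons hB h1)
  | case4 a A b B h ih =>
    rw [mergeTagged, if_neg h, List.map_cons, List.pairwise_cons]
    refine ⟨?_, ih hA hB.of_cons⟩
    intro x hx
    have hba : b ≤ a := (lt_of_not_ge h).le
    have : x ∈ (a :: A) ++ B := (mergeTagged_perm (a :: A) B).mem_iff.mp hx
    rcases List.mem_append.mp this with h1 | h1
    · rcases List.mem_cons.mp h1 with rfl | h1
      · exact hba
      · exact hba.trans (List.rel_of_pairwise_cons hA h1)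
    · exact List.rel_of_pairwise_cons hB h1

lemma head_le_head {α : Type*} [LinearOrder α] {s t : List α} (h : s ≤ t)
    {a b : α} (ha : s.head? = some a) (hb : t.head? = some b) : a ≤ b := by
  cases s with
  | nil => simp at ha
  | cons x s' =>
    cases t with
    | nil => simp at hb
    | cons y t' =>
      simp only [List.head?_cons, Option.some.injEq] at ha hb
      subst ha; subst hb
      rcases lt_or_eq_of_le h with h | h
      · exact List.head_le_of_lt h
      · injection h with h1 _; exact h1.le

lemma lcp_eq_zero_iff {α : Type*} [DecidableEq α] {a b : α} {s t : List α} :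
    lcp (a :: s) (b :: t) = 0 ↔ a ≠ b := by
  by_cases h : a = b <;> simp [lcp, h]

lemma zero_pairs_le {α : Type*} [LinearOrder α] :
    ∀ (M : List (List α)), M.Pairwise (· ≤ ·) → (∀ s ∈ M, s ≠ []) →
    ((M.zip M.tail).filter (fun p => lcp p.1 p.2 = 0)).length ≤
      (M.filterMap List.head?).toFinset.card := by
  intro M
  induction M with
  | nil => simp
  | cons s M ih =>
    cases M with
    | nil => simp
    | cons t M' =>
      intro hsort hne
      have hs : s ≠ [] := hne s (by simp)
      have ht : t ≠ [] := hne t (by simp)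
      obtain ⟨a, s', rfl⟩ := List.exists_cons_of_ne_nil hs
      obtain ⟨b, t', rfl⟩ := List.exists_cons_of_ne_nil ht
      have ih' := ih hsort.of_cons (fun u hu => hne u (List.mem_cons_of_mem _ hu))
      simp only [List.tail_cons, List.zip_cons_cons, List.filter_cons]
      by_cases hab : a = b
      · have hz : ¬ (lcp (a :: s') (b :: t') = 0) := by simp [lcp_eq_zero_iff, hab]
        rw [if_neg (by simp [hz])]
        refine le_trans ih' (Finset.card_le_card ?_)
        simp only [List.filterMap_cons, List.head?_cons, List.toFinset_cons]
        exact Finset.subset_insert _ _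
      · have hz : lcp (a :: s') (b :: t') = 0 := lcp_eq_zero_iff.mpr hab
        rw [if_pos (by simp [hz]), List.length_cons]
        have hab' : a < b := lt_of_le_of_ne
          (head_le_head (a := a) (b := b)
            (List.rel_of_pairwise_cons hsort (a' := b :: t') (by simp)) rfl rfl) hab
        have hnotmem : a ∉ (((b :: t') :: M').filterMap List.head?).toFinset := by
          intro hmem
          rw [List.mem_toFinset, List.mem_filterMap] at hmem
          obtain ⟨u, hu, hu2⟩ := hmem
          have htu : (b :: t') ≤ u := by
            rcases List.mem_cons.mp hu with rfl | hu
            · exact le_refl _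
            · exact List.rel_of_pairwise_cons hsort.of_cons hu
          have : b ≤ a := head_le_head htu rfl hu2
          exact absurd hab' (not_lt.mpr this)
        have hcard : ((((a :: s') :: (b :: t') :: M').filterMap List.head?).toFinset).card
            = ((((b :: t') :: M').filterMap List.head?).toFinset).card + 1 := by
          rw [show (((a :: s') :: (b :: t') :: M').filterMap List.head?)
              = a :: (((b :: t') :: M').filterMap List.head?) by
            simp [List.filterMap_cons]]
          rw [List.toFinset_cons, Finset.card_insert_of_notMem hnotmem]
        rw [hcard]
        exact Nat.add_le_add_right ih' 1

lemma count_le_sum_add {β : Type*} (f : β → ℕ) :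
    ∀ (l : List β), l.length ≤ (l.map f).sum + (l.filter (fun x => f x = 0)).length := by
  intro l
  induction l with
  | nil => simp
  | cons x l ih =>
    simp only [List.map_cons, List.sum_cons, List.filter_cons]
    by_cases h : f x = 0
    · rw [if_pos (by simp [h])]
      simp only [List.length_cons, h]
      omega
    · have h1 : 1 ≤ f x := Nat.one_le_iff_ne_zero.mpr h
      rw [if_neg (by simp [h])]
      simp only [List.length_cons]
      omega

lemma runsCount_le {β : Type*} [DecidableEq β] :
    ∀ (l : List β), runsCount l ≤ ((l.zip l.tail).filter (fun p => p.1 ≠ p.2)).length + 1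
  | [] => by simp [runsCount]
  | [_] => by simp [runsCount]
  | a :: b :: l => by
    have ih := runsCount_le (b :: l)
    simp only [List.tail_cons] at ih
    simp only [runsCount, List.tail_cons, List.zip_cons_cons, List.filter_cons]
    by_cases h : a = b
    · rw [if_pos h, if_neg (by simp [h])]
      omega
    · rw [if_neg h, if_pos (by simp [h]), List.length_cons]
      omega

/-- Monotonicity of the block count under the LCP bound: the number of maximal
blocks in the stable merge of sorted lists of nonempty strings is at most
`L + σ + 1`, and the number of alternations between sources (block boundaries) is
at most `L + σ`, where `σ` is the number of distinct first characters and `L` the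
sum of the LCP values at block boundaries. -/
theorem blocks_le_L_add_sigma {α : Type*} [LinearOrder α]
    (A B : List (List α))
    (hA : A.Pairwise (· ≤ ·)) (hB : B.Pairwise (· ≤ ·))
    (hne : ∀ s ∈ A ++ B, s ≠ []) :
    let T := mergeTagged A B
    let boundaries := (T.zip T.tail).filter (fun p => p.1.2 ≠ p.2.2)
    let L := (boundaries.map (fun p => lcp p.1.1 p.2.1)).sum
    let σ := (((A ++ B).filterMap List.head?).toFinset).card
    runsCount (T.map Prod.snd) ≤ L + σ + 1 ∧
    boundaries.length ≤ L + σ := by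
  intro T boundaries L σ
  have hperm : List.Perm (T.map Prod.fst) (A ++ B) := mergeTagged_perm A B
  have hsort : (T.map Prod.fst).Pairwise (· ≤ ·) := mergeTagged_sorted A B hA hB
  have hMne : ∀ s ∈ T.map Prod.fst, s ≠ [] := fun s hs => hne s (hperm.subset hs)
  have hσ : ((T.map Prod.fst).filterMap List.head?).toFinset.card = σ :=
    congrArg Finset.card (List.toFinset_eq_of_perm _ _ (hperm.filterMap _))
  -- length of zero-lcp adjacent pairs in T is at most σ
  have hzip : (T.map Prod.fst).zip ((T.map Prod.fst).tail)
      = (T.zip T.tail).map (Prod.map Prod.fst Prod.fst) := by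
    rw [← List.map_tail, List.zip_map]
  have hzero : ((T.zip T.tail).filter (fun p => lcp p.1.1 p.2.1 = 0)).length ≤ σ := by
    have h1 := zero_pairs_le (T.map Prod.fst) hsort hMne
    rw [hσ, hzip, List.filter_map, List.length_map] at h1
    simpa [Function.comp_def, Prod.map] using h1
  have hmain : boundaries.length ≤ L + σ := by
    have h1 := count_le_sum_add (fun p : (List α × ℕ) × (List α × ℕ) => lcp p.1.1 p.2.1)
      boundaries
    have h2 : (boundaries.filter (fun p => lcp p.1.1 p.2.1 = 0)).length
        ≤ ((T.zip T.tail).filter (fun p => lcp p.1.1 p.2.1 = 0)).length :=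
      (List.filter_sublist.filter _).length_le
    calc boundaries.length
        ≤ L + (boundaries.filter (fun p => lcp p.1.1 p.2.1 = 0)).length := h1
      _ ≤ L + σ := Nat.add_le_add_left (h2.trans hzero) _
  refine ⟨?_, hmain⟩
  have hruns : runsCount (T.map Prod.snd) ≤ boundaries.length + 1 := by
    have h1 := runsCount_le (T.map Prod.snd)
    have h2 : (T.map Prod.snd).zip ((T.map Prod.snd).tail)
        = (T.zip T.tail).map (Prod.map Prod.snd Prod.snd) := by
      rw [← List.map_tail, List.zip_map]
    rw [h2, List.filter_map, List.length_map] at h1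
    have heq : ((fun p : ℕ × ℕ => decide (p.1 ≠ p.2)) ∘ Prod.map Prod.snd Prod.snd)
        = (fun p : (List α × ℕ) × (List α × ℕ) => decide (p.1.2 ≠ p.2.2)) := by
      funext p
      simp [Prod.map, Function.comp]
    rw [heq] at h1
    exact h1
  omega
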